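/- arXiv:math/0105101 — 4 statements merged into one kernel-verified Lean document; each statement's English description precedes it below -/
import Mathlib

section
/- Let χ be an odd Dirichlet character modulo n and set L^{Im}(e^{2πia/n}, s) = Σ_{k≥1} Im(e^{2πiak/n})/k^s (analytically continued in s). Then for all s ∈ ℂ, (1/(2d)) Σ_{a ∈ (ℤ/n)^×} χ̄(a) L^{Im}(e^{2πia/n}, s) = (1/(2d)) n^{1-s} · (Γ(1 - s/2)/Γ((s+1)/2)) · π^{s - 1/2} · L(χ̄, 1 - s), where d = φ(n)/2 and L(χ̄,·) is the (possibly imprimitive) L-function Σ_{k≥1} χ̄(k) k^{-s}. -/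
open Complex Real DirichletCharacter HurwitzZeta Topology

/-!
For `1 < re s` the Dirichlet series of `L^{Im}(e^{2πia/n}, s)` is the sine zeta function
`sinZeta (a/n) s`, so by the identity theorem `F a = sinZeta (a/n)` everywhere. The functional
equation of the odd Hurwitz zeta function gives
`sinZeta x s = Γ_ℝ(2 - s) / Γ_ℝ(s + 1) · ζ_odd(x, 1 - s)`, and `Γ_ℝ(2 - s) / Γ_ℝ(s + 1)` is the
Gamma quotient times `π ^ (s - 1/2)`. Since `χ̄` is odd and vanishes off the units,
`∑_a χ̄(a) ζ_odd(a/n, 1 - s) = n ^ (1 - s) L(χ̄, 1 - s)`.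
-/

lemma tsum_pnat_im_exp_pow_div_cpow (x : ℝ) {s : ℂ} (hs : 1 < s.re) :
    ∑' k : ℕ+, ((cexp (2 * π * I * x) ^ (k : ℕ)).im : ℂ) / (k : ℂ) ^ s = sinZeta x s := by
  rw [tsum_pnat_eq_tsum_of_eq_zero
    (f := fun k : ℕ ↦ ((cexp (2 * π * I * x) ^ k).im : ℂ) / (k : ℂ) ^ s) (by simp),
    ← (hasSum_nat_sinZeta x hs).tsum_eq]
  congr with k
  rw [← Complex.exp_nat_mul,
    show (k : ℂ) * (2 * π * I * x) = ((2 * π * x * k : ℝ) : ℂ) * I by push_cast; ring,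
    exp_ofReal_mul_I_im]

lemma ZMod.tsum_pnat_im_exp_pow_div_cpow {n : ℕ} [NeZero n] (j : ZMod n) {s : ℂ} (hs : 1 < s.re) :
    ∑' k : ℕ+, ((cexp (2 * π * I * (j.val : ℂ) / n) ^ (k : ℕ)).im : ℂ) / (k : ℂ) ^ s =
      sinZeta (ZMod.toAddCircle j) s := by
  rw [ZMod.toAddCircle_apply, ← _root_.tsum_pnat_im_exp_pow_div_cpow _ hs]
  push_cast
  ring_nf

lemma Differentiable.eq_of_forall_one_lt_re {f g : ℂ → ℂ} (hf : Differentiable ℂ f)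
    (hg : Differentiable ℂ g) (h : ∀ s : ℂ, 1 < s.re → f s = g s) : f = g := by
  refine AnalyticOnNhd.eq_of_eventuallyEq (fun z _ ↦ hf.analyticAt z) (fun z _ ↦ hg.analyticAt z)
    (z₀ := 2) ?_
  have h_nhds : {s : ℂ | 1 < s.re} ∈ 𝓝 2 :=
    (isOpen_lt continuous_const continuous_re).mem_nhds (by norm_num)
  filter_upwards [h_nhds] using h

lemma Gammaℝ_two_sub_div_Gammaℝ_add_one (s : ℂ) :
    Gammaℝ (2 - s) / Gammaℝ (s + 1) =
      Gamma (1 - s / 2) / Gamma ((s + 1) / 2) * π ^ (s - 1 / 2) := by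
  have hπ : (π : ℂ) ≠ 0 := ofReal_ne_zero.mpr pi_ne_zero
  rw [Gammaℝ_def, Gammaℝ_def, mul_div_mul_comm, ← cpow_sub _ _ hπ, mul_comm]
  congr 2
  · congr 1; ring
  · ring

lemma Gammaℝ_two_sub_ne_zero {s : ℂ} (hs : ∀ k : ℕ, s ≠ 2 + 2 * k) : Gammaℝ (2 - s) ≠ 0 := by
  rw [Ne, Gammaℝ_eq_zero_iff, not_exists]
  exact fun k hk ↦ hs k (by linear_combination -hk)

lemma sinZeta_eq_Gammaℝ_div_mul_hurwitzZetaOdd_one_sub (a : UnitAddCircle) {s : ℂ}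
    (hs : Gammaℝ (2 - s) ≠ 0) :
    sinZeta a s = Gammaℝ (2 - s) / Gammaℝ (s + 1) * hurwitzZetaOdd a (1 - s) := by
  rw [hurwitzZetaOdd, completedHurwitzZetaOdd_one_sub, sinZeta, show 1 - s + 1 = 2 - s by ring]
  field_simp

lemma ZMod.sum_mul_sinZeta_eq_LFunction_one_sub {N : ℕ} [NeZero N] {Φ : ZMod N → ℂ}
    (hΦ : Φ.Odd) {s : ℂ} (hs : Gammaℝ (2 - s) ≠ 0) :
    ∑ j : ZMod N, Φ j * sinZeta (toAddCircle j) s =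
      N ^ (1 - s) * (Gammaℝ (2 - s) / Gammaℝ (s + 1)) * ZMod.LFunction Φ (1 - s) := by
  have hN : (N : ℂ) ^ (1 - s) * (N : ℂ) ^ (-(1 - s)) = 1 := by
    rw [← cpow_add _ _ (Nat.cast_ne_zero.mpr (NeZero.ne N)), add_neg_cancel, cpow_zero]
  simp only [ZMod.LFunction_def_odd hΦ, sinZeta_eq_Gammaℝ_div_mul_hurwitzZetaOdd_one_sub _ hs,
    Finset.mul_sum]
  refine Finset.sum_congr rfl fun j _ ↦ ?_
  linear_combination
    (Φ j * (Gammaℝ (2 - s) / Gammaℝ (s + 1)) * hurwitzZetaOdd (toAddCircle j) (1 - s)) * hN.symm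

theorem LIm_functional_equation_general (n : ℕ) [NeZero n]
    (χ : DirichletCharacter ℂ n) (hodd : χ (-1) = -1) (d : ℕ)
    (F : (ZMod n)ˣ → ℂ → ℂ) (hF : ∀ a, Differentiable ℂ (F a))
    (hagree : ∀ a : (ZMod n)ˣ, ∀ s : ℂ, 1 < s.re →
      F a s = ∑' k : ℕ+,
        ((Complex.exp (2 * Real.pi * Complex.I * ((a : ZMod n).val : ℂ) / n) ^ (k : ℕ)).im : ℂ)
          / (k : ℂ) ^ s)
    (s : ℂ) (hs : ∀ k : ℕ, s ≠ 2 + 2 * k) :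
    (1 / (2 * d)) * ∑ a : (ZMod n)ˣ, (starRingEnd ℂ) (χ a) * F a s =
      (1 / (2 * d)) * (n : ℂ) ^ (1 - s) *
        (Complex.Gamma (1 - s / 2) / Complex.Gamma ((s + 1) / 2)) *
        (Real.pi : ℂ) ^ (s - 1 / 2) *
        DirichletCharacter.LFunction (χ.ringHomComp (starRingEnd ℂ)) (1 - s) := by
  set χ' : DirichletCharacter ℂ n := χ.ringHomComp (starRingEnd ℂ)
  have hχ'_odd : χ'.Odd := by
    rw [DirichletCharacter.Odd, MulChar.ringHomComp_apply, hodd, map_neg, map_one]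
  have hF_eq (a : (ZMod n)ˣ) : F a = sinZeta (ZMod.toAddCircle (a : ZMod n)) :=
    (hF a).eq_of_forall_one_lt_re (differentiableAt_sinZeta _) fun z hz ↦
      (hagree a z hz).trans (ZMod.tsum_pnat_im_exp_pow_div_cpow _ hz)
  have h_units : ∑ a : (ZMod n)ˣ, (starRingEnd ℂ) (χ a) * F a s =
      ∑ j : ZMod n, χ' j * sinZeta (ZMod.toAddCircle j) s :=
    Fintype.sum_of_injective _ Units.val_injective _ _
      (fun j hj ↦ by rw [χ'.map_nonunit fun hu ↦ hj ⟨hu.unit, rfl⟩, zero_mul])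
      (fun a ↦ by rw [hF_eq]; rfl)
  rw [h_units,
    ZMod.sum_mul_sinZeta_eq_LFunction_one_sub hχ'_odd.to_fun (Gammaℝ_two_sub_ne_zero hs),
    Gammaℝ_two_sub_div_Gammaℝ_add_one, DirichletCharacter.LFunction]
  ring

/-- Functional equation variant: for an odd Dirichlet character `χ` mod `n` and the entire
continuations `F a` of `L^{Im}(e^{2πia/n}, ·)`, one has, away from the poles of `Γ(1-s/2)`,
`(1/(2d)) ∑_a χ̄(a) F_a(s) = (1/(2d)) n^{1-s} (Γ(1-s/2)/Γ((s+1)/2)) π^{s-1/2} L(χ̄, 1-s)`,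
where `d = φ(n)/2`. -/
theorem LIm_functional_equation (n : ℕ) (hn : 3 ≤ n) [NeZero n]
    (χ : DirichletCharacter ℂ n) (hodd : χ (-1) = -1)
    (d : ℕ) (hd : d = Nat.totient n / 2)
    (F : (ZMod n)ˣ → ℂ → ℂ) (hF : ∀ a, Differentiable ℂ (F a))
    (hagree : ∀ a : (ZMod n)ˣ, ∀ s : ℂ, 1 < s.re →
      F a s = ∑' k : ℕ+,
        ((Complex.exp (2 * Real.pi * Complex.I * ((a : ZMod n).val : ℂ) / n) ^ (k : ℕ)).im : ℂ)
          / (k : ℂ) ^ s)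
    (s : ℂ) (hs : ∀ k : ℕ, s ≠ 2 + 2 * k) :
    (1 / (2 * d)) * ∑ a : (ZMod n)ˣ, (starRingEnd ℂ) (χ a) * F a s =
      (1 / (2 * d)) * (n : ℂ) ^ (1 - s) *
        (Complex.Gamma (1 - s / 2) / Complex.Gamma ((s + 1) / 2)) *
        (Real.pi : ℂ) ^ (s - 1 / 2) *
        DirichletCharacter.LFunction (χ.ringHomComp (starRingEnd ℂ)) (1 - s) :=
  LIm_functional_equation_general n χ hodd d F hF hagree s hs
end

section
/- Let G be a finite abelian group of order 2d with an element c of order 2, and let Φ = {Φ_1, …, Φ_d} ⊂ G be a set of coset representatives for {e, c} (a 'CM type': G = Φ ⊔ cΦ). Let f: G → ℂ be an odd function (f(cx) = -f(x)) and M_f the d×d matrix with entries (M_f)_{l,k} = f(Φ_k^{-1}Φ_l). If ⟨f, χ⟩ := (1/|G|) Σ_{g} f(g) χ̄(g) ≠ 0 for every odd character χ of G, then M_f is invertible, and the unique solution of M_f X = Y is given by X_j = Σ_{χ odd} χ(Φ_j) (Σ_l χ̄(Φ_l) Y_l) / (d² ⟨f, χ⟩). -/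
/-!
Let `V` be the matrix `V l χ = χ (Φ l)` whose columns are the odd characters restricted to the
CM type `Φ`. Summing the odd characters gives `(|G| / 2) (δ_{g,1} - δ_{g,c})`, and since `Φ`
meets each coset of `{1, c}` once, `V Vᴴ = d • 1`. Since `f` and every odd `χ` are odd, the
summand `χ̄ g f (Φ k⁻¹ g)` is invariant under `g ↦ c g`, so summing it over `Φ` is half the sum
over `G`; so the rows of `Vᴴ` are left eigenvectors of `M`:
`Vᴴ M = diagonal (|G| ⟨f, χ⟩ / 2) Vᴴ`. Hence `V (diagonal (d² ⟨f, χ⟩))⁻¹ Vᴴ` is a left inverse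
of `M`.
-/

open scoped Classical
open ComplexConjugate Matrix

theorem Fintype.sum_subtype_eq_sum_ite {α M : Type*} [Fintype α] [AddCommMonoid M]
    (p : α → Prop) [DecidablePred p] [Fintype (Subtype p)] (f : α → M) :
    ∑ a : Subtype p, f a = ∑ a, if p a then f a else 0 := by
  rw [← Finset.sum_subtype (Finset.univ.filter p) (by simp), Finset.sum_filter]

theorem Matrix.mul_diagonal_mul_mul_eq_one {ι κ K : Type*} [Fintype ι] [Fintype κ]
    [DecidableEq ι] [DecidableEq κ] [Field K] {V : Matrix ι κ K} {W : Matrix κ ι K}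
    {M : Matrix ι ι K} {n : K} {D w : κ → K} (hn : n ≠ 0) (hVW : V * W = n • 1)
    (hWM : W * M = diagonal D * W) (hw : ∀ k, n * (w k * D k) = 1) :
    V * diagonal w * W * M = 1 := by
  have hwD : diagonal w * diagonal D = n⁻¹ • (1 : Matrix κ κ K) := by
    rw [diagonal_mul_diagonal, ← diagonal_one, ← diagonal_smul]
    congr 1; ext k
    simp [eq_inv_of_mul_eq_one_right (hw k)]
  rw [Matrix.mul_assoc, hWM, ← Matrix.mul_assoc, Matrix.mul_assoc V, hwD, Matrix.mul_smul,
    Matrix.mul_one, Matrix.smul_mul, hVW, smul_smul, inv_mul_cancel₀ hn, one_smul]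

section CharacterSums

variable {G : Type*} [CommGroup G]

theorem ite_unitsHom_apply_eq_neg_one {c : G} (hc : c ^ 2 = 1) (χ : G →* ℂˣ) (g : G) :
    (if χ c = -1 then (χ g : ℂ) else 0) = ((χ g : ℂ) - χ (c * g)) / 2 := by
  have hsq : (χ c : ℂ) ^ 2 = 1 := by
    rw [← Units.val_pow_eq_pow_val, ← map_pow, hc, map_one, Units.val_one]
  rw [map_mul, Units.val_mul]
  split_ifs with h
  · rw [h, Units.val_neg, Units.val_one]; ring
  · have hχc : (χ c : ℂ) = 1 := (sq_eq_one_iff.1 hsq).resolve_right fun h' =>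
      h (Units.ext (by rw [h', Units.val_neg, Units.val_one]))
    rw [hχc]; ring

def IsCMType {ι : Type*} (c : G) (Φ : ι → G) : Prop :=
  Function.Bijective fun p : ι × Bool => (if p.2 then c else 1) * Φ p.1

def oddCharMatrix {ι : Type*} (c : G) (Φ : ι → G) : Matrix ι {χ : G →* ℂˣ // χ c = -1} ℂ :=
  Matrix.of fun i χ => χ.1 (Φ i)

theorem oddCharMatrix_mul_diagonal_mul_conjTranspose_mulVec_apply {ι : Type*} [Fintype ι]
    [Fintype (G →* ℂˣ)] [DecidableEq (G →* ℂˣ)] (c : G) (Φ : ι → G) (w : (G →* ℂˣ) → ℂ)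
    (Y : ι → ℂ) (j : ι) :
    ((oddCharMatrix c Φ * diagonal (fun χ : {χ : G →* ℂˣ // χ c = -1} => w χ.1) *
      (oddCharMatrix c Φ)ᴴ) *ᵥ Y) j =
      ∑ χ : G →* ℂˣ,
        if χ c = -1 then (χ (Φ j) : ℂ) * (w χ * ∑ l, conj (χ (Φ l) : ℂ) * Y l) else 0 := by
  rw [← mulVec_mulVec, ← mulVec_mulVec, ← Fintype.sum_subtype_eq_sum_ite]
  simp only [mulVec, dotProduct, diagonal_apply, ite_mul, zero_mul, Finset.sum_ite_eq,
    Finset.mem_univ, if_true, oddCharMatrix, conjTranspose_apply, of_apply, RCLike.star_def]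

namespace IsCMType

variable {ι : Type*} {c : G} {Φ : ι → G}

theorem mul_inv_eq_one_iff (hΦ : IsCMType c Φ) {i j : ι} : Φ i * (Φ j)⁻¹ = 1 ↔ i = j := by
  rw [mul_inv_eq_one]
  refine ⟨fun h => ?_, congrArg Φ⟩
  simpa using hΦ.1 (a₁ := (i, false)) (a₂ := (j, false)) (by simpa using h)

theorem mul_inv_ne (hΦ : IsCMType c Φ) (i j : ι) : Φ i * (Φ j)⁻¹ ≠ c := by
  rw [Ne, mul_inv_eq_iff_eq_mul]
  intro h
  simpa using hΦ.1 (a₁ := (i, false)) (a₂ := (j, true)) (by simpa using h)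

end IsCMType

variable [Fintype G]

theorem sum_unitsHom_apply_eq_ite [Fintype (G →* ℂˣ)] (g : G) :
    ∑ χ : G →* ℂˣ, (χ g : ℂ) = if g = 1 then (Fintype.card G : ℂ) else 0 := by
  let e : AddChar (Additive G) ℂ ≃ (G →* ℂˣ) :=
    AddChar.toMonoidHomEquiv.trans MonoidHom.toHomUnitsMulEquiv.toEquiv
  rw [← Fintype.sum_equiv e (fun ψ => ψ (Additive.ofMul g)) _ fun _ => rfl,
    AddChar.sum_apply_eq_ite]
  simp only [ofMul_eq_zero, Fintype.card_additive]

theorem sum_odd_unitsHom_apply [Fintype (G →* ℂˣ)] {c : G} (hc : c ^ 2 = 1) (g : G) :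
    ∑ χ : {χ : G →* ℂˣ // χ c = -1}, (χ.1 g : ℂ) =
      ((if g = 1 then (Fintype.card G : ℂ) else 0) -
        if g = c then (Fintype.card G : ℂ) else 0) / 2 := by
  have hcg : c * g = 1 ↔ g = c := by
    rw [mul_eq_one_iff_inv_eq, inv_eq_of_mul_eq_one_right (by rwa [← sq]), eq_comm]
  rw [Fintype.sum_subtype_eq_sum_ite (fun χ : G →* ℂˣ => χ c = -1) fun χ => (χ g : ℂ)]
  simp only [ite_unitsHom_apply_eq_neg_one hc, ← Finset.sum_div, Finset.sum_sub_distrib,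
    sum_unitsHom_apply_eq_ite, hcg]

theorem conj_unitsHom_apply (χ : G →* ℂˣ) (g : G) : conj (χ g : ℂ) = χ g⁻¹ := by
  have hnorm : ‖(χ g : ℂ)‖ = 1 := by
    refine Complex.norm_eq_one_of_pow_eq_one (n := Fintype.card G) ?_ Fintype.card_ne_zero
    rw [← Units.val_pow_eq_pow_val, ← map_pow, pow_card_eq_one, map_one, Units.val_one]
  rw [map_inv, Units.val_inv_eq_inv_val, Complex.inv_eq_conj hnorm]

/-- `|G| ⟨f, χ⟩` in the notation of the statement. -/
def charCoeff (f : G → ℂ) (χ : G →* ℂˣ) : ℂ := ∑ g, f g * conj (χ g : ℂ)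

theorem sum_conj_mul_apply_inv_mul (f : G → ℂ) (χ : G →* ℂˣ) (a : G) :
    ∑ g, conj (χ g : ℂ) * f (a⁻¹ * g) = conj (χ a : ℂ) * charCoeff f χ := by
  rw [← Fintype.sum_equiv (Equiv.mulLeft a) (fun g => conj (χ (a * g) : ℂ) * f (a⁻¹ * (a * g)))
    _ fun _ => rfl, charCoeff, Finset.mul_sum]
  refine Finset.sum_congr rfl fun g _ => ?_
  rw [inv_mul_cancel_left, map_mul, Units.val_mul, map_mul]
  ring

namespace IsCMType

variable {ι : Type*} [Fintype ι] {c : G} {Φ : ι → G}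

theorem sum_eq_two_nsmul_sum {M : Type*} [AddCommMonoid M] (hΦ : IsCMType c Φ)
    {F : G → M} (hF : ∀ x, F (c * x) = F x) : ∑ g, F g = 2 • ∑ i, F (Φ i) := by
  rw [← Fintype.sum_bijective _ hΦ _ F fun _ => rfl, Fintype.sum_prod_type, Finset.smul_sum]
  simp [hF, two_nsmul]

theorem card_eq (hΦ : IsCMType c Φ) : Fintype.card G = 2 * Fintype.card ι := by
  simpa [smul_eq_mul] using hΦ.sum_eq_two_nsmul_sum (M := ℕ) (F := fun _ => 1) fun _ => rfl

variable [Fintype (G →* ℂˣ)]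

theorem oddCharMatrix_mul_conjTranspose [DecidableEq ι] (hΦ : IsCMType c Φ) (hc : c ^ 2 = 1) :
    oddCharMatrix c Φ * (oddCharMatrix c Φ)ᴴ = (Fintype.card ι : ℂ) • 1 := by
  ext i j
  simp only [mul_apply, oddCharMatrix, of_apply, conjTranspose_apply, RCLike.star_def,
    conj_unitsHom_apply, ← Units.val_mul, ← map_mul]
  rw [sum_odd_unitsHom_apply hc, hΦ.mul_inv_eq_one_iff, if_neg (hΦ.mul_inv_ne i j), hΦ.card_eq,
    Matrix.smul_apply, one_apply]
  split_ifs <;> push_cast <;> ring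

theorem conjTranspose_oddCharMatrix_mul (hΦ : IsCMType c Φ) {f : G → ℂ}
    (hf : ∀ x, f (c * x) = -f x) :
    (oddCharMatrix c Φ)ᴴ * Matrix.of (fun l k => f ((Φ k)⁻¹ * Φ l)) =
      diagonal (fun χ : {χ : G →* ℂˣ // χ c = -1} => charCoeff f χ.1 / 2) *
        (oddCharMatrix c Φ)ᴴ := by
  ext χ k
  rw [diagonal_mul]
  obtain ⟨χ, hχ⟩ := χ
  simp only [mul_apply, oddCharMatrix, of_apply, conjTranspose_apply, RCLike.star_def]
  have hodd : ∀ x, conj (χ (c * x) : ℂ) * f ((Φ k)⁻¹ * (c * x)) =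
      conj (χ x : ℂ) * f ((Φ k)⁻¹ * x) := by
    intro x
    rw [map_mul, hχ, Units.val_mul, Units.val_neg, Units.val_one, mul_left_comm, hf]
    simp
  have hsum := hΦ.sum_eq_two_nsmul_sum (F := fun g => conj (χ g : ℂ) * f ((Φ k)⁻¹ * g)) hodd
  rw [sum_conj_mul_apply_inv_mul, two_nsmul, ← two_mul] at hsum
  linear_combination -hsum / 2

end IsCMType

end CharacterSums

theorem cm_type_matrix_invertible_general (G : Type*) [CommGroup G] [Fintype G]
    [Fintype (G →* ℂˣ)] (d : ℕ)
    (c : G) (hc : orderOf c = 2)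
    (Φ : Fin d → G)
    (hΦ : Function.Bijective (fun p : Fin d × Bool => (if p.2 then c else 1) * Φ p.1))
    (f : G → ℂ) (hf : ∀ x, f (c * x) = -f x)
    (M : Matrix (Fin d) (Fin d) ℂ) (hM : ∀ l k, M l k = f ((Φ k)⁻¹ * Φ l))
    (hpair : ∀ χ : G →* ℂˣ, χ c = -1 →
      (1 / (2 * d : ℂ)) * ∑ g : G, f g * (starRingEnd ℂ) (χ g : ℂ) ≠ 0) :
    IsUnit M ∧
    ∀ X Y : Fin d → ℂ, M.mulVec X = Y → ∀ j,
      X j = ∑ χ : G →* ℂˣ, if χ c = -1 then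
          (χ (Φ j) : ℂ) * (∑ l, (starRingEnd ℂ) ((χ (Φ l) : ℂ)) * Y l) /
            ((d : ℂ) ^ 2 * ((1 / (2 * d : ℂ)) * ∑ g : G, f g * (starRingEnd ℂ) (χ g : ℂ)))
        else 0 := by
  have hΦ : IsCMType c Φ := hΦ
  have hd : (d : ℂ) ≠ 0 := Nat.cast_ne_zero.2 <| by rintro rfl; simpa using hΦ.card_eq
  have hVV := hΦ.oddCharMatrix_mul_conjTranspose (hc ▸ pow_orderOf_eq_one c)
  rw [Fintype.card_fin] at hVV
  have hVM := hΦ.conjTranspose_oddCharMatrix_mul hf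
  rw [← show M = Matrix.of fun l k => f ((Φ k)⁻¹ * Φ l) from Matrix.ext hM] at hVM
  set w : (G →* ℂˣ) → ℂ := fun χ => ((d : ℂ) ^ 2 * ((1 / (2 * d : ℂ)) * charCoeff f χ))⁻¹
  have hNM := Matrix.mul_diagonal_mul_mul_eq_one (w := fun χ => w χ.1) hd hVV hVM fun χ => by
    have : charCoeff f χ.1 ≠ 0 := right_ne_zero_of_mul (hpair χ.1 χ.2)
    simp only [w]
    field_simp
  refine ⟨(isUnit_iff_isUnit_det M).2 (isUnit_det_of_left_inverse hNM), fun X Y hXY j => ?_⟩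
  rw [← one_mulVec X, ← hNM, ← mulVec_mulVec, hXY,
    oddCharMatrix_mul_diagonal_mul_conjTranspose_mulVec_apply]
  refine Finset.sum_congr rfl fun χ _ => ?_
  simp only [w, charCoeff]
  split_ifs <;> ring

/-- Let `G` be finite abelian of order `2d` with `c` of order 2, `Φ : Fin d → G` a CM type
(a transversal of `{1, c}`), `f : G → ℂ` odd, and `M` the matrix `(f (Φ k⁻¹ * Φ l))_{l,k}`.
If `⟨f,χ⟩ ≠ 0` for every odd character `χ`, then `M` is invertible and the solution of
`M X = Y` is `X j = ∑_{χ odd} χ(Φ j) (∑_l χ̄(Φ l) Y l) / (d² ⟨f,χ⟩)`. -/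
theorem cm_type_matrix_invertible (G : Type*) [CommGroup G] [Fintype G]
    [Fintype (G →* ℂˣ)] (d : ℕ) (hd : Fintype.card G = 2 * d)
    (c : G) (hc : orderOf c = 2)
    (Φ : Fin d → G)
    (hΦ : Function.Bijective (fun p : Fin d × Bool => (if p.2 then c else 1) * Φ p.1))
    (f : G → ℂ) (hf : ∀ x, f (c * x) = -f x)
    (M : Matrix (Fin d) (Fin d) ℂ) (hM : ∀ l k, M l k = f ((Φ k)⁻¹ * Φ l))
    (hpair : ∀ χ : G →* ℂˣ, χ c = -1 →
      (1 / (2 * d : ℂ)) * ∑ g : G, f g * (starRingEnd ℂ) (χ g : ℂ) ≠ 0) :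
    IsUnit M ∧
    ∀ X Y : Fin d → ℂ, M.mulVec X = Y → ∀ j,
      X j = ∑ χ : G →* ℂˣ, if χ c = -1 then
          (χ (Φ j) : ℂ) * (∑ l, (starRingEnd ℂ) ((χ (Φ l) : ℂ)) * Y l) /
            ((d : ℂ) ^ 2 * ((1 / (2 * d : ℂ)) * ∑ g : G, f g * (starRingEnd ℂ) (χ g : ℂ)))
        else 0 :=
  cm_type_matrix_invertible_general G d c hc Φ hΦ f hf M hM hpair
end

section
/- Let z ∈ ℂ with |z| = 1, z^n = 1, z ≠ 1, and for u > 0, s ∈ ℂ consider the series F(u) = Σ_{k≥1} k e^{-k²πu/n} Im(z^k). Then for all N ≥ 1 and u > 0, |Σ_{k=1}^{N} k e^{-k²πu/n} Im(z^k)| ≤ 2C √(n/(2πe)) · u^{-1/2}, where C = max_{0≤K} |Σ_{j=0}^{K} Im(z^j)| (which is finite since partial sums of Im(z^j) over full periods vanish). -/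
/-!
Abel summation against the partial sums of `Im(z^j)`, which are bounded by `C`, bounds the sum
by `C` times the total variation of `a_k = k e^{-ck²}` (with `c = πu/n`) on `[0, N]` plus `a_N`.
Since `x ↦ x e^{-cx²}` increases up to `1/√(2c)` and decreases afterwards, this is at most twice
its maximum `√(1/(2ce)) = √(n/(2πe)) u^{-1/2}`.
-/

open Real Finset

theorem abs_sum_range_mul_le_of_abs_sum_range_le {a b : ℕ → ℝ} {C : ℝ}
    (hC : ∀ K, |∑ j ∈ range (K + 1), b j| ≤ C) (N : ℕ) :
    |∑ k ∈ range (N + 1), a k * b k| ≤ C * (∑ k ∈ range N, |a (k + 1) - a k| + |a N|) := by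
  have hparts := sum_range_by_parts a b (N + 1)
  simp only [smul_eq_mul, add_tsub_cancel_right] at hparts
  rw [hparts]
  calc _ ≤ |a N * ∑ j ∈ range (N + 1), b j|
          + ∑ k ∈ range N, |(a (k + 1) - a k) * ∑ j ∈ range (k + 1), b j| :=
        (abs_sub _ _).trans (add_le_add_right (abs_sum_le_sum_abs _ _) _)
    _ ≤ |a N| * C + ∑ k ∈ range N, |a (k + 1) - a k| * C := by
        simp only [abs_mul]
        gcongr with k
        exacts [hC N, hC k]
    _ = _ := by rw [← sum_mul]; ring

theorem sum_range_abs_sub_add_le_of_unimodal {a : ℕ → ℝ} {K : ℕ} {M : ℝ}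
    (hinc : ∀ k < K, a k ≤ a (k + 1)) (hdec : ∀ k, K ≤ k → a (k + 1) ≤ a k)
    (hM : ∀ k, a k ≤ M) (N : ℕ) :
    ∑ k ∈ range N, |a (k + 1) - a k| + a N ≤ 2 * M - a 0 := by
  have hup : ∀ m ≤ K, ∑ k ∈ range m, |a (k + 1) - a k| = a m - a 0 := fun m hm => by
    rw [← sum_range_sub]
    exact sum_congr rfl fun k hk =>
      abs_of_nonneg (sub_nonneg.2 (hinc k (by grind)))
  rcases le_total N K with hNK | hKN
  · linarith [hup N hNK, hM N]
  · have hdown : ∑ k ∈ Ico K N, |a (k + 1) - a k| = a K - a N := by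
      rw [← neg_sub, ← sum_Ico_sub a hKN, ← sum_neg_distrib]
      exact sum_congr rfl fun k hk =>
        abs_of_nonpos (sub_nonpos.2 (hdec k (mem_Ico.1 hk).1))
    rw [← sum_range_add_sum_Ico _ hKN, hup K le_rfl, hdown]
    linarith [hM K]

theorem exists_nat_peak_of_monotoneOn_antitoneOn {f : ℝ → ℝ} {t : ℝ} (ht : 0 ≤ t)
    (hmono : MonotoneOn f (Set.Icc 0 t)) (hanti : AntitoneOn f (Set.Ici t)) :
    ∃ K : ℕ, (∀ k < K, f k ≤ f ↑(k + 1)) ∧ ∀ k, K ≤ k → f ↑(k + 1) ≤ f k := by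
  set k₀ := ⌊t⌋₊
  have hbelow : ∀ k < k₀, f k ≤ f ↑(k + 1) := fun k hk => by
    have : ((k + 1 : ℕ) : ℝ) ≤ t := (Nat.cast_le.2 hk).trans (Nat.floor_le ht)
    push_cast at this ⊢
    exact hmono ⟨k.cast_nonneg, by linarith⟩ ⟨by positivity, this⟩ (by linarith)
  have habove : ∀ k, k₀ + 1 ≤ k → f ↑(k + 1) ≤ f k := fun k hk => by
    have : t ≤ k := (Nat.lt_floor_add_one t).le.trans (by exact_mod_cast hk)
    push_cast
    exact hanti (Set.mem_Ici.2 this) (Set.mem_Ici.2 (by linarith)) (by linarith)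
  by_cases hpeak : f k₀ ≤ f ↑(k₀ + 1)
  · refine ⟨k₀ + 1, fun k hk => ?_, habove⟩
    rcases Nat.lt_succ_iff_lt_or_eq.1 hk with hk | rfl
    exacts [hbelow k hk, hpeak]
  · refine ⟨k₀, hbelow, fun k hk => ?_⟩
    rcases hk.eq_or_lt with rfl | hk
    exacts [le_of_not_ge hpeak, habove k hk]

theorem hasDerivAt_mul_exp_neg_mul_sq (c x : ℝ) :
    HasDerivAt (fun x => x * exp (-(c * x ^ 2)))
      (exp (-(c * x ^ 2)) * (1 - 2 * c * x ^ 2)) x := by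
  have hexp : HasDerivAt (fun x => exp (-(c * x ^ 2)))
      (exp (-(c * x ^ 2)) * -(c * (2 * x))) x := by
    simpa using (((hasDerivAt_pow 2 x).const_mul c).neg).exp
  exact ((hasDerivAt_id' x).fun_mul hexp).congr_deriv (by ring)

section GaussianWeight

variable {c : ℝ}

theorem monotoneOn_mul_exp_neg_mul_sq (hc : 0 < c) :
    MonotoneOn (fun x => x * exp (-(c * x ^ 2))) (Set.Icc 0 √(1 / (2 * c))) := by
  refine monotoneOn_of_deriv_nonneg (convex_Icc _ _) (by fun_prop)
    (fun x _ => (hasDerivAt_mul_exp_neg_mul_sq c x).differentiableAt.differentiableWithinAt)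
    fun x hx => ?_
  rw [interior_Icc] at hx
  have hx2 : x ^ 2 * (2 * c) < 1 := (lt_div_iff₀ (by positivity)).1 ((lt_sqrt hx.1.le).1 hx.2)
  rw [(hasDerivAt_mul_exp_neg_mul_sq c x).deriv]
  exact mul_nonneg (exp_pos _).le (by linarith)

theorem antitoneOn_mul_exp_neg_mul_sq (hc : 0 < c) :
    AntitoneOn (fun x => x * exp (-(c * x ^ 2))) (Set.Ici √(1 / (2 * c))) := by
  refine antitoneOn_of_deriv_nonpos (convex_Ici _) (by fun_prop)
    (fun x _ => (hasDerivAt_mul_exp_neg_mul_sq c x).differentiableAt.differentiableWithinAt)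
    fun x hx => ?_
  rw [interior_Ici, Set.mem_Ioi] at hx
  have hx2 : 1 < x ^ 2 * (2 * c) :=
    (div_lt_iff₀ (by positivity)).1 ((sqrt_lt' ((sqrt_nonneg _).trans_lt hx)).1 hx)
  rw [(hasDerivAt_mul_exp_neg_mul_sq c x).deriv]
  exact mul_nonpos_of_nonneg_of_nonpos (exp_pos _).le (by linarith)

theorem mul_exp_neg_mul_sq_le (hc : 0 < c) (x : ℝ) :
    x * exp (-(c * x ^ 2)) ≤ √(1 / (2 * c * exp 1)) := by
  refine le_sqrt_of_sq_le ?_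
  -- `y e^{-y} ≤ e^{-1}` is `y ≤ e^{y - 1}`
  have hy : ∀ y, y * exp (-y) ≤ exp (-1) := fun y => by
    calc y * exp (-y) ≤ exp (y - 1) * exp (-y) := by
          gcongr; linarith [add_one_le_exp (y - 1)]
      _ = exp (-1) := by rw [← exp_add]; ring_nf
  calc (x * exp (-(c * x ^ 2))) ^ 2
        = 2 * c * x ^ 2 * exp (-(2 * c * x ^ 2)) / (2 * c) := by
        rw [mul_pow, ← exp_nat_mul]; field_simp; ring_nf
    _ ≤ exp (-1) / (2 * c) := by gcongr; exact hy _
    _ = 1 / (2 * c * exp 1) := by rw [exp_neg]; field_simp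

end GaussianWeight

theorem gauss_sum_partial_estimate_general (n : ℕ) (hn : 1 ≤ n) (z : ℂ)
    (C : ℝ) (hC : ∀ K : ℕ, |∑ j ∈ Finset.range (K + 1), (z ^ j).im| ≤ C)
    (N : ℕ) (u : ℝ) (hu : 0 < u) :
    |∑ k ∈ Finset.Icc 1 N, (k : ℝ) * Real.exp (-(k : ℝ) ^ 2 * Real.pi * u / n) * (z ^ k).im|
      ≤ 2 * C * Real.sqrt (n / (2 * Real.pi * Real.exp 1)) * u ^ (-(1 / 2 : ℝ)) := by
  have hn₀ : (0 : ℝ) < n := by exact_mod_cast hn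
  set c := π * u / n
  have hc : 0 < c := by positivity
  set a : ℕ → ℝ := fun k => k * exp (-(c * (k : ℝ) ^ 2))
  obtain ⟨K, hinc, hdec⟩ := exists_nat_peak_of_monotoneOn_antitoneOn (sqrt_nonneg _)
    (monotoneOn_mul_exp_neg_mul_sq hc) (antitoneOn_mul_exp_neg_mul_sq hc)
  have hvar := sum_range_abs_sub_add_le_of_unimodal (a := a) hinc hdec
    (fun k => mul_exp_neg_mul_sq_le hc k) N
  have hsum : ∑ k ∈ Icc 1 N, (k : ℝ) * exp (-(k : ℝ) ^ 2 * π * u / n) * (z ^ k).im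
      = ∑ k ∈ range (N + 1), a k * (z ^ k).im := by
    rw [range_eq_Ico, sum_eq_sum_Ico_succ_bot (by omega : 0 < N + 1), zero_add,
      Ico_add_one_right_eq_Icc]
    simp only [a, c, Nat.cast_zero, zero_mul, zero_add]
    exact sum_congr rfl fun k _ => by ring_nf
  have hM : √(1 / (2 * c * exp 1)) = √(n / (2 * π * exp 1)) * u ^ (-(1 / 2 : ℝ)) := by
    rw [rpow_neg hu.le, ← sqrt_eq_rpow, ← sqrt_inv, ← sqrt_mul (by positivity)]
    congr 1
    simp only [c]
    field_simp
  have hC₀ : 0 ≤ C := (abs_nonneg _).trans (hC 0)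
  calc _ ≤ C * (∑ k ∈ range N, |a (k + 1) - a k| + |a N|) := by
        rw [hsum]; exact abs_sum_range_mul_le_of_abs_sum_range_le hC N
    _ ≤ C * (2 * √(1 / (2 * c * exp 1))) := by
        rw [abs_of_nonneg (by positivity)]
        gcongr
        simpa [a] using hvar
    _ = _ := by rw [hM]; ring

/-- Abel-summation estimate: for a nontrivial `n`-th root of unity `z` and `C` a bound for
the partial sums of `Im(z^j)`, the partial sums of `∑ k e^{-k²πu/n} Im(z^k)` are bounded by
`2C √(n/(2πe)) u^{-1/2}` for all `u > 0`. -/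
theorem gauss_sum_partial_estimate (n : ℕ) (hn : 1 ≤ n) (z : ℂ)
    (hz : ‖z‖ = 1) (hzn : z ^ n = 1) (hz1 : z ≠ 1)
    (C : ℝ) (hC : ∀ K : ℕ, |∑ j ∈ Finset.range (K + 1), (z ^ j).im| ≤ C)
    (N : ℕ) (hN : 1 ≤ N) (u : ℝ) (hu : 0 < u) :
    |∑ k ∈ Finset.Icc 1 N, (k : ℝ) * Real.exp (-(k : ℝ) ^ 2 * Real.pi * u / n) * (z ^ k).im|
      ≤ 2 * C * Real.sqrt (n / (2 * Real.pi * Real.exp 1)) * u ^ (-(1 / 2 : ℝ)) :=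
  gauss_sum_partial_estimate_general n hn z C hC N u hu
end

section
/- Let d ≥ 1, and for 1 ≤ j ≤ d let φ_j ∈ ℝ \ 2πℤ and ν_j > 0. Suppose the spectrum of an operator on a ℤ-graded space is such that, for q = 0,…,d and tuples (n_1,…,n_d) ∈ ℕ^d, the eigenvalue 2π Σ_j n_j ν_j occurs in degree q with g-trace T·binom(#{j : n_j ≠ 0}, q)·Π_j e^{i n_j φ_j} (T a fixed constant). Then the associated zeta function Z(s) = Σ_q (−1)^{q+1} q Σ_{(n_j)≠0} (trace)/(eigenvalue)^s equals T · Σ_{j=1}^d (2π ν_j)^{-s} L(e^{iφ_j}, s), where L(z,s) = Σ_{k≥1} z^k/k^s. -/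
/-!
By the identity `∑_q (-1)^(q+1) q binom(c, q) = [c = 1]`, only the multi-indices `n = k • e_j`
with a single nonzero entry contribute. Such an index has eigenvalue `2π k ν_j` and trace
`T e^{i k φ_j}`, and `(2π k ν_j)^{-s} = (2π ν_j)^{-s} k^{-s}`, so the surviving terms are those of
`T (2π ν_j)^{-s} L(e^{iφ_j}, s)`; for `Re s > 1` all these series converge absolutely, which
justifies the regrouping.
-/

open Complex Finset
open scoped Classical

theorem sum_range_neg_one_pow_mul_mul_choose {R : Type*} [CommRing R] {c d : ℕ} (hcd : c ≤ d) :
    ∑ q ∈ range (d + 1), (-1 : R) ^ (q + 1) * q * c.choose q = if c = 1 then 1 else 0 := by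
  rw [← sum_subset (range_subset_range.mpr (Nat.succ_le_succ hcd)) fun q _ hq => by
    simp [Nat.choose_eq_zero_of_lt (not_lt.mp (mt mem_range.mpr hq))]]
  rcases c with _ | m
  · simp
  have shift (q : ℕ) : (-1 : R) ^ (q + 1 + 1) * ↑(q + 1) * ↑((m + 1).choose (q + 1)) =
      (m + 1) * ((-1) ^ q * m.choose q) := by
    have := congrArg (Nat.cast : ℕ → R) (Nat.add_one_mul_choose_eq m q)
    push_cast at this ⊢
    linear_combination -(-1 : R) ^ q * this
  have alternating : ∑ q ∈ range (m + 1), (-1 : R) ^ q * m.choose q = if m = 0 then 1 else 0 := by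
    exact_mod_cast congrArg (Int.cast : ℤ → R) Int.alternating_sum_range_choose
  rw [sum_range_succ', Finset.sum_congr rfl fun q _ => shift q, ← mul_sum, alternating]
  rcases m with _ | m <;> simp

theorem hasSum_prod_of_fintype_left {α β γ : Type*} [AddCommMonoid α] [TopologicalSpace α]
    [ContinuousAdd α] [Fintype β] {f : β × γ → α} {a : β → α}
    (h : ∀ b, HasSum (fun c => f (b, c)) (a b)) : HasSum f (∑ b, a b) := by
  have fiber (b : β) : HasSum (fun p : β × γ => if p.1 = b then f p else 0) (a b) := by
    refine (Prod.mk_right_injective b).hasSum_iff (fun p hp => if_neg ?_) |>.mp ?_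
    · rintro rfl
      exact hp ⟨p.2, rfl⟩
    · simpa [Function.comp_def] using h b
  simpa using hasSum_sum (s := univ) fun b _ => fiber b

theorem pi_single_pnat_injective {ι : Type*} [DecidableEq ι] :
    Function.Injective fun p : ι × ℕ+ => (Pi.single p.1 (p.2 : ℕ) : ι → ℕ) := by
  rintro ⟨i, k⟩ ⟨j, l⟩ h
  obtain rfl : i = j := by
    by_contra hij
    simpa [Pi.single_apply, hij] using congrFun h i
  simpa [Pi.single_apply, PNat.coe_inj] using congrFun h i

theorem exists_pi_single_pnat_eq {ι : Type*} [Fintype ι] [DecidableEq ι] {n : ι → ℕ}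
    (hn : (univ.filter fun j => n j ≠ 0).card = 1) :
    ∃ p : ι × ℕ+, Pi.single p.1 (p.2 : ℕ) = n := by
  obtain ⟨j, hj⟩ := card_eq_one.mp hn
  have supp (i : ι) : n i ≠ 0 ↔ i = j := by simpa using congrArg (i ∈ ·) hj
  refine ⟨(j, ⟨n j, Nat.pos_of_ne_zero ((supp j).mpr rfl)⟩), funext fun i => ?_⟩
  by_cases hij : i = j
  · subst hij; simp
  · simpa [Pi.single_apply, hij, eq_comm] using (not_congr (supp i)).mpr hij

theorem card_filter_pi_single_ne_zero {ι M : Type*} [Fintype ι] [DecidableEq ι] [Zero M]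
    [DecidableEq M] {j : ι} {k : M} (hk : k ≠ 0) :
    (univ.filter fun i => (Pi.single j k : ι → M) i ≠ 0).card = 1 := by
  rw [card_eq_one]
  refine ⟨j, ext fun i => ?_⟩
  by_cases hi : i = j <;> simp [hi, hk]

theorem hasSum_of_card_filter_ne_zero_eq_one {ι α : Type*} [Fintype ι] [DecidableEq ι]
    [AddCommMonoid α] [TopologicalSpace α] [ContinuousAdd α] {f : (ι → ℕ) → α} {a : ι → α}
    (hf : ∀ n, f n ≠ 0 → (univ.filter fun j => n j ≠ 0).card = 1)
    (h : ∀ j, HasSum (fun k : ℕ+ => f (Pi.single j (k : ℕ))) (a j)) :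
    HasSum f (∑ j, a j) := by
  refine (pi_single_pnat_injective.hasSum_iff fun n hn => ?_).mp (hasSum_prod_of_fintype_left h)
  by_contra hfn
  exact hn (exists_pi_single_pnat_eq (hf n hfn))

theorem summable_pow_div_cpow {z s : ℂ} (hz : ‖z‖ ≤ 1) (hs : 1 < s.re) :
    Summable fun k : ℕ => z ^ k / (k : ℂ) ^ s := by
  refine .of_norm_bounded (Complex.summable_one_div_nat_cpow.mpr hs).norm fun k => ?_
  rw [norm_div, norm_pow, norm_div, norm_one]
  gcongr
  exact pow_le_one₀ (norm_nonneg z) hz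

theorem prod_exp_I_mul_pi_single {ι : Type*} [Fintype ι] [DecidableEq ι] (φ : ι → ℝ) (j : ι)
    (k : ℕ) : ∏ i, exp (I * ((Pi.single j k : ι → ℕ) i * φ i)) = exp (I * φ j) ^ k := by
  rw [Fintype.prod_eq_single j fun i hi => by simp [hi], Pi.single_eq_same, ← exp_nat_mul]
  ring_nf

theorem ofReal_mul_natCast_cpow {a : ℝ} (ha : 0 ≤ a) (k : ℕ) (s : ℂ) :
    ((a * k : ℝ) : ℂ) ^ s = (a : ℂ) ^ s * (k : ℂ) ^ s := by
  rw [ofReal_mul, mul_cpow_ofReal_nonneg ha k.cast_nonneg, ofReal_natCast]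

theorem torsion_zeta_function_eq_general (d : ℕ)
    (φ : Fin d → ℝ)
    (ν : Fin d → ℝ) (hν : ∀ j, 0 < ν j) (T : ℂ) (s : ℂ) (hs : 1 < s.re) :
    (∑' n : Fin d → ℕ, if n ≠ 0 then
        (∑ q ∈ Finset.range (d + 1),
          ((-1 : ℂ) ^ (q + 1) * q * (Nat.choose (Finset.univ.filter
            (fun j => n j ≠ 0)).card q))) *
          T * (∏ j, Complex.exp (Complex.I * (n j * φ j))) /
          (((2 * Real.pi * ∑ j, (n j : ℝ) * ν j : ℝ) : ℂ) ^ s)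
      else 0) =
      T * ∑ j, (((2 * Real.pi * ν j : ℝ) : ℂ) ^ (-s)) *
        ∑' k : ℕ+, Complex.exp (Complex.I * φ j) ^ (k : ℕ) / (k : ℂ) ^ s := by
  have card_le (n : Fin d → ℕ) : (univ.filter fun j => n j ≠ 0).card ≤ d :=
    (card_filter_le _ _).trans_eq (card_fin d)
  rw [mul_sum]
  refine (hasSum_of_card_filter_ne_zero_eq_one (fun n hn => ?_) fun j => ?_).tsum_eq
  · by_contra h
    simp [sum_range_neg_one_pow_mul_mul_choose (card_le n), h] at hn
  have hL := (summable_pow_div_cpow (z := exp (I * φ j))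
    (by rw [mul_comm]; exact (norm_exp_ofReal_mul_I _).le) hs).comp_injective PNat.coe_injective
  rw [← mul_assoc]
  refine (congrArg (HasSum · _) (funext fun k => ?_)).mpr (hL.hasSum.mul_left _)
  have eigenvalue : 2 * Real.pi * ∑ i, ((Pi.single j (k : ℕ) : Fin d → ℕ) i : ℝ) * ν i =
      2 * Real.pi * ν j * (k : ℕ) := by
    rw [Fintype.sum_eq_single j fun i hi => by simp [hi], Pi.single_eq_same]
    ring
  have hνj := hν j
  rw [if_pos (by simp [k.ne_zero]), sum_range_neg_one_pow_mul_mul_choose (card_le _),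
    card_filter_pi_single_ne_zero k.ne_zero, if_pos rfl, prod_exp_I_mul_pi_single, eigenvalue,
    ofReal_mul_natCast_cpow (by positivity), cpow_neg, Function.comp_apply, div_eq_mul_inv,
    div_eq_mul_inv, mul_inv]
  ring

/-- The zeta function of the torsion computation: summing the graded traces
`(−1)^{q+1} q · T · binom(#{j : n_j ≠ 0}, q) · Π_j e^{i n_j φ_j}` over eigenvalues
`2π Σ_j n_j ν_j` collapses, via the combinatorial identity, to
`T · Σ_j (2πν_j)^{-s} L(e^{iφ_j}, s)`. -/
theorem torsion_zeta_function_eq (d : ℕ) (hd : 1 ≤ d)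
    (φ : Fin d → ℝ) (hφ : ∀ j, ∀ m : ℤ, φ j ≠ 2 * Real.pi * m)
    (ν : Fin d → ℝ) (hν : ∀ j, 0 < ν j) (T : ℂ) (s : ℂ) (hs : 1 < s.re) :
    (∑' n : Fin d → ℕ, if n ≠ 0 then
        (∑ q ∈ Finset.range (d + 1),
          ((-1 : ℂ) ^ (q + 1) * q * (Nat.choose (Finset.univ.filter
            (fun j => n j ≠ 0)).card q))) *
          T * (∏ j, Complex.exp (Complex.I * (n j * φ j))) /
          (((2 * Real.pi * ∑ j, (n j : ℝ) * ν j : ℝ) : ℂ) ^ s)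
      else 0) =
      T * ∑ j, (((2 * Real.pi * ν j : ℝ) : ℂ) ^ (-s)) *
        ∑' k : ℕ+, Complex.exp (Complex.I * φ j) ^ (k : ℕ) / (k : ℂ) ^ s :=
  torsion_zeta_function_eq_general d φ ν hν T s hs
end
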